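/- arXiv:2403.16475 — 2 statements merged into one kernel-verified Lean document; each statement's English description precedes it below -/
import Mathlib

section
/- There exist δ ∈ (0,1), C > 0 and a unique holomorphic function f on the disc {|z| < δ} such that f(z)² = (1 − s(z))/2 for all |z| < δ and f′(0) = 1/2, where s(z) := exp(½·Log(1−z²)); moreover f(z)² = (1 + i·r(z))/2 for 0 < |z| < δ with Im z > 0, f(z)² = (1 − i·r(z))/2 for 0 < |z| < δ with Im z < 0, and |f(z) − z/2| ≤ C·|z|³ for all |z| < δ. (This f is the conformal map f⁽⁰⁾ used in the local parametrix at the origin, satisfying f⁽⁰⁾(z) = (z/2)(1+O(z)) as z → 0.) -/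
open Complex Filter Set Topology Metric

/-- Principal branch of √(z²−1), holomorphic on ℂ∖[−1,1]. -/
noncomputable def rr (z : ℂ) : ℂ :=
  Complex.exp ((1 / 2 : ℂ) * Complex.log (z - 1)) *
    Complex.exp ((1 / 2 : ℂ) * Complex.log (z + 1))

/-- s(z) = exp(½ Log(1−z²)), the principal branch of √(1−z²) near 0. -/
noncomputable def ss (z : ℂ) : ℂ := Complex.exp ((1 / 2 : ℂ) * Complex.log (1 - z ^ 2))

noncomputable def EE (w : ℂ) : ℂ := Complex.exp ((1 / 2 : ℂ) * Complex.log (1 - w))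

noncomputable def UU (w : ℂ) : ℂ :=
  Complex.exp (-((1 / 2 : ℂ) * Complex.log (2 * (1 + EE w))))

def TT : Set ℂ := {w | 1 - w ∈ Complex.slitPlane ∧ 2 * (1 + EE w) ∈ Complex.slitPlane}

lemma isOpen_TT : IsOpen TT := by
  have hA : IsOpen {w : ℂ | 1 - w ∈ Complex.slitPlane} :=
    Complex.isOpen_slitPlane.preimage (by fun_prop)
  have hlog : ContinuousOn (fun w : ℂ => Complex.log (1 - w))
      {w : ℂ | 1 - w ∈ Complex.slitPlane} :=
    ContinuousOn.clog (by fun_prop) (fun x hx => hx)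
  have hE : ContinuousOn EE {w : ℂ | 1 - w ∈ Complex.slitPlane} := by
    unfold EE; exact (continuousOn_const.mul hlog).cexp
  have hcont : ContinuousOn (fun w => 2 * (1 + EE w)) {w : ℂ | 1 - w ∈ Complex.slitPlane} :=
    continuousOn_const.mul (continuousOn_const.add hE)
  have : TT = {w : ℂ | 1 - w ∈ Complex.slitPlane} ∩
      (fun w => 2 * (1 + EE w)) ⁻¹' Complex.slitPlane := by
    ext w; simp [TT, Set.mem_setOf_eq]
  rw [this]
  exact hcont.isOpen_inter_preimage hA Complex.isOpen_slitPlane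

lemma EE_zero : EE 0 = 1 := by simp [EE]

lemma mem_TT_zero : (0 : ℂ) ∈ TT := by
  constructor
  · simp [Complex.mem_slitPlane_iff]
  · rw [EE_zero]; norm_num [Complex.mem_slitPlane_iff]

lemma log_four : Complex.log 4 = 2 * Complex.log 2 := by
  have h4 : (4 : ℂ) = 2 * 2 := by norm_num
  have harg : Complex.arg 2 + Complex.arg 2 ∈ Set.Ioc (-Real.pi) Real.pi := by
    have : Complex.arg 2 = 0 := by
      simpa using Complex.arg_ofReal_of_nonneg (by norm_num : (0:ℝ) ≤ 2)
    rw [this]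
    simp only [add_zero]
    exact ⟨by linarith [Real.pi_pos], Real.pi_pos.le⟩
  rw [h4, Complex.log_mul (by norm_num) (by norm_num) harg]; ring

lemma UU_zero : UU 0 = 1 / 2 := by
  have : (2 : ℂ) * (1 + EE 0) = 4 := by rw [EE_zero]; norm_num
  rw [UU, this, log_four]
  have : -((1/2 : ℂ) * (2 * Complex.log 2)) = -Complex.log 2 := by ring
  rw [this, Complex.exp_neg, Complex.exp_log (by norm_num)]
  norm_num

lemma sq_EE {w : ℂ} (hw : w ∈ TT) : EE w ^ 2 = 1 - w := by
  have h : (1/2 : ℂ) * Complex.log (1 - w) + (1/2) * Complex.log (1 - w)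
      = Complex.log (1 - w) := by ring
  rw [EE, sq, ← Complex.exp_add, h, Complex.exp_log (Complex.slitPlane_ne_zero hw.1)]

lemma sq_UU {w : ℂ} (hw : w ∈ TT) : UU w ^ 2 = (2 * (1 + EE w))⁻¹ := by
  have h : -((1/2 : ℂ) * Complex.log (2 * (1 + EE w)))
      + -((1/2) * Complex.log (2 * (1 + EE w)))
      = -Complex.log (2 * (1 + EE w)) := by ring
  rw [UU, sq, ← Complex.exp_add, h, Complex.exp_neg,
    Complex.exp_log (Complex.slitPlane_ne_zero hw.2)]

lemma diff_UU {w : ℂ} (hw : w ∈ TT) : DifferentiableAt ℂ UU w := by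
  have h1 : DifferentiableAt ℂ (fun w : ℂ => Complex.log (1 - w)) w :=
    DifferentiableAt.clog (by fun_prop) hw.1
  have hE : DifferentiableAt ℂ EE w := by
    unfold EE; exact (h1.const_mul _).cexp
  have h2 : DifferentiableAt ℂ (fun w => (2:ℂ) * (1 + EE w)) w :=
    (hE.const_add 1).const_mul 2
  have h3 := h2.clog hw.2
  unfold UU; exact ((h3.const_mul _).neg).cexp

lemma ss_eq_EE (z : ℂ) : ss z = EE (z ^ 2) := rfl

lemma re_pos_sub {z : ℂ} (hz : ‖z‖ < 1/2) : 0 < (1 - z).re := by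
  have h1 : z.re ≤ |z.re| := le_abs_self _
  have h2 := Complex.abs_re_le_norm z
  simp only [Complex.sub_re, Complex.one_re]
  linarith

lemma re_pos_add {z : ℂ} (hz : ‖z‖ < 1/2) : 0 < (1 + z).re := by
  have h1 : -|z.re| ≤ z.re := neg_abs_le _
  have h2 := Complex.abs_re_le_norm z
  simp only [Complex.add_re, Complex.one_re]
  linarith

lemma log_split {z : ℂ} (hz : ‖z‖ < 1/2) :
    Complex.log (1 - z ^ 2) = Complex.log (1 - z) + Complex.log (1 + z) := by
  have hre1 := re_pos_sub hz
  have hre2 := re_pos_add hz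
  have h1 : (1 - z) ≠ 0 := by intro h; rw [h] at hre1; simp at hre1
  have h2 : (1 + z) ≠ 0 := by intro h; rw [h] at hre2; simp at hre2
  have ha1 : |Complex.arg (1 - z)| < Real.pi / 2 :=
    Complex.abs_arg_lt_pi_div_two_iff.mpr (Or.inl hre1)
  have ha2 : |Complex.arg (1 + z)| < Real.pi / 2 :=
    Complex.abs_arg_lt_pi_div_two_iff.mpr (Or.inl hre2)
  have hfac : (1 : ℂ) - z ^ 2 = (1 - z) * (1 + z) := by ring
  rw [hfac]
  refine Complex.log_mul h1 h2 ?_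
  obtain ⟨hb1, hb2⟩ := abs_lt.mp ha1
  obtain ⟨hc1, hc2⟩ := abs_lt.mp ha2
  exact ⟨by linarith, by linarith⟩

lemma ss_prod {z : ℂ} (hz : ‖z‖ < 1/2) :
    ss z = Complex.exp ((1 / 2 : ℂ) * Complex.log (1 - z)) *
      Complex.exp ((1 / 2 : ℂ) * Complex.log (1 + z)) := by
  rw [ss, log_split hz, mul_add, Complex.exp_add]

lemma exp_half_pi_I : Complex.exp ((1/2 : ℂ) * (↑Real.pi * Complex.I)) = Complex.I := by
  have h : (1/2 : ℂ) * (↑Real.pi * Complex.I) = ↑(Real.pi/2) * Complex.I := by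
    push_cast; ring
  rw [h, Complex.exp_mul_I, ← Complex.ofReal_cos, ← Complex.ofReal_sin,
    Real.cos_pi_div_two, Real.sin_pi_div_two]
  simp

lemma exp_neg_half_pi_I :
    Complex.exp ((1/2 : ℂ) * -(↑Real.pi * Complex.I)) = -Complex.I := by
  have h : (1/2 : ℂ) * -(↑Real.pi * Complex.I) = ↑(-(Real.pi/2)) * Complex.I := by
    push_cast; ring
  rw [h, Complex.exp_mul_I, ← Complex.ofReal_cos, ← Complex.ofReal_sin,
    Real.cos_neg, Real.sin_neg, Real.cos_pi_div_two, Real.sin_pi_div_two]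
  simp

lemma log_flip_pos {z : ℂ} (him : 0 < z.im) :
    Complex.log (z - 1) = Complex.log (1 - z) + ↑Real.pi * Complex.I := by
  have hneg : z - 1 = -(1 - z) := by ring
  have him' : (1 - z).im < 0 := by simp [Complex.sub_im]; linarith
  apply Complex.ext
  · simp only [Complex.log_re, Complex.add_re, Complex.mul_re, Complex.ofReal_re,
      Complex.ofReal_im, Complex.I_re, Complex.I_im]
    rw [hneg, norm_neg]
    ring
  · simp only [Complex.log_im, Complex.add_im, Complex.mul_im, Complex.ofReal_re,
      Complex.ofReal_im, Complex.I_re, Complex.I_im]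
    rw [hneg, Complex.arg_neg_eq_arg_add_pi_of_im_neg him']
    ring

lemma log_flip_neg {z : ℂ} (him : z.im < 0) :
    Complex.log (z - 1) = Complex.log (1 - z) + -(↑Real.pi * Complex.I) := by
  have hneg : z - 1 = -(1 - z) := by ring
  have him' : 0 < (1 - z).im := by simp [Complex.sub_im]; linarith
  apply Complex.ext
  · simp only [Complex.log_re, Complex.add_re, Complex.neg_re, Complex.mul_re,
      Complex.ofReal_re, Complex.ofReal_im, Complex.I_re, Complex.I_im]
    rw [hneg, norm_neg]
    ring
  · simp only [Complex.log_im, Complex.add_im, Complex.neg_im, Complex.mul_im,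
      Complex.ofReal_re, Complex.ofReal_im, Complex.I_re, Complex.I_im]
    rw [hneg, Complex.arg_neg_eq_arg_sub_pi_of_im_pos him']
    ring

lemma rr_pos {z : ℂ} (hz : ‖z‖ < 1/2) (him : 0 < z.im) :
    rr z = Complex.I * ss z := by
  have hcomm : z + 1 = 1 + z := by ring
  rw [rr, log_flip_pos him, mul_add, Complex.exp_add, exp_half_pi_I, hcomm, ss_prod hz]
  ring

lemma rr_neg {z : ℂ} (hz : ‖z‖ < 1/2) (him : z.im < 0) :
    rr z = -(Complex.I * ss z) := by
  have hcomm : z + 1 = 1 + z := by ring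
  rw [rr, log_flip_neg him, mul_add, Complex.exp_add, exp_neg_half_pi_I, hcomm, ss_prod hz]
  ring

theorem stmt4 :
    ∃ δ ∈ Set.Ioo (0 : ℝ) 1, ∃ C > (0 : ℝ), ∃ f : ℂ → ℂ,
      DifferentiableOn ℂ f (ball (0 : ℂ) δ) ∧
      (∀ z ∈ ball (0 : ℂ) δ, f z ^ 2 = (1 - ss z) / 2) ∧
      deriv f 0 = 1 / 2 ∧
      (∀ g : ℂ → ℂ, DifferentiableOn ℂ g (ball (0 : ℂ) δ) →
        (∀ z ∈ ball (0 : ℂ) δ, g z ^ 2 = (1 - ss z) / 2) →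
        deriv g 0 = 1 / 2 → Set.EqOn f g (ball (0 : ℂ) δ)) ∧
      (∀ z ∈ ball (0 : ℂ) δ, z ≠ 0 → 0 < z.im →
        f z ^ 2 = (1 + Complex.I * rr z) / 2) ∧
      (∀ z ∈ ball (0 : ℂ) δ, z ≠ 0 → z.im < 0 →
        f z ^ 2 = (1 - Complex.I * rr z) / 2) ∧
      (∀ z ∈ ball (0 : ℂ) δ,
        ‖f z - z / 2‖ ≤ C * ‖z‖ ^ 3) := by
  obtain ⟨ρ₀, hρ₀pos, hball⟩ := Metric.isOpen_iff.mp isOpen_TT 0 mem_TT_zero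
  set ρ := ρ₀ / 2 with hρdef
  have hρpos : 0 < ρ := by positivity
  have hρ : closedBall (0 : ℂ) ρ ⊆ TT :=
    (closedBall_subset_ball (by simp [hρdef]; linarith)).trans hball
  -- Lipschitz bound for UU on the closed ball
  have hUdiffOn : DifferentiableOn ℂ UU TT := fun w hw => (diff_UU hw).differentiableWithinAt
  have hUan : AnalyticOnNhd ℂ UU TT := hUdiffOn.analyticOnNhd isOpen_TT
  have hderivcont : ContinuousOn (deriv UU) (closedBall 0 ρ) :=
    (hUan.deriv.continuousOn).mono hρ
  obtain ⟨K, hK⟩ := (isCompact_closedBall (0 : ℂ) ρ).exists_bound_of_continuousOn hderivcont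
  have hK0 : 0 ≤ K := le_trans (norm_nonneg _) (hK 0 (mem_closedBall_self hρpos.le))
  have hLip : ∀ w ∈ closedBall (0 : ℂ) ρ, ‖UU w - UU 0‖ ≤ K * ‖w - 0‖ := by
    intro w hw
    exact (convex_closedBall (0 : ℂ) ρ).norm_image_sub_le_of_norm_hasDerivWithin_le
      (fun x hx => ((diff_UU (hρ hx)).hasDerivAt).hasDerivWithinAt)
      (fun x hx => hK x hx) (mem_closedBall_self hρpos.le) hw
  -- choice of δ
  set δ : ℝ := min (Real.sqrt ρ) (1 / 2) with hδdef
  have hδpos : 0 < δ := lt_min (Real.sqrt_pos.mpr hρpos) (by norm_num)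
  have hδlt1 : δ < 1 := lt_of_le_of_lt (min_le_right _ _) (by norm_num)
  have hδhalf : δ ≤ 1 / 2 := min_le_right _ _
  have hmem : ∀ z ∈ ball (0 : ℂ) δ, z ^ 2 ∈ closedBall (0 : ℂ) ρ := by
    intro z hz
    rw [mem_ball, Complex.dist_eq, sub_zero] at hz
    rw [mem_closedBall, Complex.dist_eq, sub_zero, norm_pow]
    have h1 : ‖z‖ ^ 2 < δ ^ 2 :=
      pow_lt_pow_left₀ hz (norm_nonneg z) (by norm_num)
    have h2 : δ ^ 2 ≤ Real.sqrt ρ ^ 2 := by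
      apply pow_le_pow_left₀ hδpos.le (min_le_left _ _)
    rw [Real.sq_sqrt hρpos.le] at h2
    linarith
  have hTz : ∀ z ∈ ball (0 : ℂ) δ, z ^ 2 ∈ TT := fun z hz => hρ (hmem z hz)
  have habsz : ∀ z ∈ ball (0 : ℂ) δ, ‖z‖ < 1 / 2 := by
    intro z hz
    rw [mem_ball, Complex.dist_eq, sub_zero] at hz
    linarith
  -- the function
  set f : ℂ → ℂ := fun z => z * UU (z ^ 2) with hfdef
  have hf0 : f 0 = 0 := by simp [hfdef]
  have hfdiff : DifferentiableOn ℂ f (ball (0 : ℂ) δ) := by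
    intro z hz
    exact ((differentiableAt_id.mul
      ((diff_UU (hTz z hz)).comp (f := fun z : ℂ => z ^ 2) z (by fun_prop)))).differentiableWithinAt
  have hfsq : ∀ z ∈ ball (0 : ℂ) δ, f z ^ 2 = (1 - ss z) / 2 := by
    intro z hz
    have hT := hTz z hz
    have hb : (2 : ℂ) * (1 + EE (z ^ 2)) ≠ 0 := Complex.slitPlane_ne_zero hT.2
    have hsE := sq_EE hT
    have hb1 : (1 + EE (z ^ 2)) ≠ 0 := fun h => hb (by rw [h, mul_zero])
    have h1 : f z ^ 2 = z ^ 2 * (2 * (1 + EE (z ^ 2)))⁻¹ := by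
      rw [hfdef]; simp only; rw [mul_pow, sq_UU hT]
    rw [h1, ss_eq_EE]
    field_simp
    linear_combination hsE
  have hfderiv : deriv f 0 = 1 / 2 := by
    have hU0 : HasDerivAt UU (deriv UU 0) 0 := (diff_UU mem_TT_zero).hasDerivAt
    have hsq0 : HasDerivAt (fun z : ℂ => z ^ 2) 0 0 := by
      simpa using hasDerivAt_pow 2 (0 : ℂ)
    have hU0' : HasDerivAt UU (deriv UU 0) ((fun z : ℂ => z ^ 2) 0) := by
      simpa using hU0
    have hcomp : HasDerivAt (fun z : ℂ => UU (z ^ 2)) (deriv UU 0 * 0) 0 := by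
      exact HasDerivAt.comp (h₂ := UU) (h := fun z : ℂ => z ^ 2) 0 hU0' hsq0
    have hmul : HasDerivAt (fun z : ℂ => id z * UU (z ^ 2)) _ 0 := (hasDerivAt_id (0 : ℂ)).mul hcomp
    have := hmul.deriv
    simpa [hfdef, UU_zero] using this
  refine ⟨δ, ⟨hδpos, hδlt1⟩, K + 1, by linarith, f, hfdiff, hfsq, hfderiv, ?_, ?_, ?_, ?_⟩
  · -- uniqueness
    intro g hgdiff hgsq hgderiv
    have hfan : AnalyticOnNhd ℂ f (ball 0 δ) := hfdiff.analyticOnNhd isOpen_ball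
    have hgan : AnalyticOnNhd ℂ g (ball 0 δ) := hgdiff.analyticOnNhd isOpen_ball
    refine hfan.eqOn_of_preconnected_of_frequently_eq hgan
      (convex_ball (0 : ℂ) δ).isPreconnected (mem_ball_self hδpos) ?_
    by_contra hcon
    rw [Filter.not_frequently] at hcon
    have hss0 : ss 0 = 1 := by simp [ss]
    have hg0 : g 0 = 0 := by
      have h : g 0 ^ 2 = 0 := by
        rw [hgsq 0 (mem_ball_self hδpos), hss0]; ring
      exact sq_eq_zero_iff.mp h
    have hballmem : ∀ᶠ z in 𝓝[≠] (0 : ℂ), z ∈ ball (0 : ℂ) δ :=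
      eventually_nhdsWithin_of_eventually_nhds
        (isOpen_ball.eventually_mem (mem_ball_self hδpos))
    have hgen : ∀ᶠ z in 𝓝[≠] (0 : ℂ), g z = -f z := by
      filter_upwards [hcon, hballmem] with z hne hzb
      have h1 := hfsq z hzb
      have h2 := hgsq z hzb
      have h0 : (g z - f z) * (g z + f z) = 0 := by linear_combination h2 - h1
      rcases mul_eq_zero.mp h0 with h | h
      · exact absurd (sub_eq_zero.mp h).symm hne
      · exact eq_neg_of_add_eq_zero_left h
    have hgev : g =ᶠ[𝓝 (0 : ℂ)] fun z => -f z := by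
      have h' : ∀ᶠ z in 𝓝 (0 : ℂ), z ≠ 0 → g z = -f z :=
        eventually_nhdsWithin_iff.mp hgen
      filter_upwards [h'] with z hz
      by_cases hz0 : z = 0
      · rw [hz0, hg0, hf0, neg_zero]
      · exact hz hz0
    have hd : deriv g 0 = deriv (fun z => -f z) 0 := hgev.deriv_eq
    rw [deriv.fun_neg, hfderiv, hgderiv] at hd
    norm_num at hd
  · -- upper half plane
    intro z hz hz0 him
    rw [hfsq z hz, rr_pos (habsz z hz) him]
    ring_nf
    rw [Complex.I_sq]
    ring
  · -- lower half plane
    intro z hz hz0 him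
    rw [hfsq z hz, rr_neg (habsz z hz) him]
    ring_nf
    rw [Complex.I_sq]
    ring
  · -- error bound
    intro z hz
    have h1 : f z - z / 2 = z * (UU (z ^ 2) - UU 0) := by
      rw [hfdef, UU_zero]; ring
    rw [h1, norm_mul]
    have h2 : ‖UU (z ^ 2) - UU 0‖ ≤ K * ‖z ^ 2 - 0‖ := hLip _ (hmem z hz)
    rw [sub_zero] at h2
    rw [norm_pow] at h2
    have habs : ‖z‖ ≥ 0 := norm_nonneg z
    calc ‖z‖ * ‖UU (z ^ 2) - UU 0‖
        ≤ ‖z‖ * (K * ‖z‖ ^ 2) := by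
          apply mul_le_mul_of_nonneg_left h2 habs
      _ ≤ (K + 1) * ‖z‖ ^ 3 := by nlinarith [norm_nonneg z]
end

section
/- Let χ ≥ 0 and τ > 0 be real and define g(z) := r(z)/4 − (iχ/τ)·Log D(z) for z ∈ ℂ∖[−1,1]. Then for every x ∈ (0,1), the limit lim_{ε→0⁺} ( g(x+iε) + g(x−iε) ) exists and equals 0; that is, the boundary values of the g-function satisfy g₊(x) + g₋(x) = 0 on (0,1). -/
open Complex Filter Set Topology

/-- D(z) = z/(1 + i√(z²−1)). -/
noncomputable def DD (z : ℂ) : ℂ := z / (1 + Complex.I * rr z)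

/-- The g-function g(z) = √(z²−1)/4 − (iχ/τ)·Log D(z) (with t = −iτ, so χ/t = iχ/τ). -/
noncomputable def gg (χ τ : ℝ) (z : ℂ) : ℂ :=
  rr z / 4 - (Complex.I * (χ : ℂ) / (τ : ℂ)) * Complex.log (DD z)

theorem stmt7 (χ τ : ℝ) (hχ : 0 ≤ χ) (hτ : 0 < τ) (x : ℝ) (hx : x ∈ Set.Ioo (0 : ℝ) 1) :
    Tendsto (fun ε : ℝ =>
        gg χ τ ((x : ℂ) + (ε : ℂ) * Complex.I) + gg χ τ ((x : ℂ) - (ε : ℂ) * Complex.I))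
      (𝓝[>] 0) (𝓝 0) := by
  obtain ⟨hx0, hx1⟩ := hx
  set s : ℝ := Real.exp (Real.log (1 - x) / 2) * Real.exp (Real.log (1 + x) / 2) with hs_def
  have hs0 : 0 < s := mul_pos (Real.exp_pos _) (Real.exp_pos _)
  have hs2 : s ^ 2 = (1 - x) * (1 + x) := by
    rw [hs_def, mul_pow, ← Real.exp_nat_mul, ← Real.exp_nat_mul]
    push_cast
    rw [mul_div_cancel₀ _ (two_ne_zero), mul_div_cancel₀ _ (two_ne_zero),
      Real.exp_log (by linarith), Real.exp_log (by linarith)]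
  have hs1 : s < 1 := by nlinarith
  -- z ↦ x + εI tends into {0 ≤ im}, z ↦ x − εI into {im < 0}
  have hplus : Tendsto (fun ε : ℝ => (x : ℂ) + (ε : ℂ) * Complex.I - 1)
      (𝓝[>] 0) (𝓝[{z : ℂ | 0 ≤ z.im}] ((x : ℂ) - 1)) := by
    apply tendsto_nhdsWithin_of_tendsto_nhds_of_eventually_within
    · have : Tendsto (fun ε : ℝ => (x : ℂ) + (ε : ℂ) * Complex.I - 1) (𝓝 0)
          (𝓝 ((x : ℂ) + (0 : ℂ) * Complex.I - 1)) := by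
        apply Tendsto.sub_const
        exact (tendsto_const_nhds.add ((Complex.continuous_ofReal.tendsto 0).mul
          tendsto_const_nhds))
      simpa using this.mono_left nhdsWithin_le_nhds
    · filter_upwards [self_mem_nhdsWithin] with ε (hε : 0 < ε)
      simp [le_of_lt hε]
  have hminus : Tendsto (fun ε : ℝ => (x : ℂ) - (ε : ℂ) * Complex.I - 1)
      (𝓝[>] 0) (𝓝[{z : ℂ | z.im < 0}] ((x : ℂ) - 1)) := by
    apply tendsto_nhdsWithin_of_tendsto_nhds_of_eventually_within
    · have : Tendsto (fun ε : ℝ => (x : ℂ) - (ε : ℂ) * Complex.I - 1) (𝓝 0)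
          (𝓝 ((x : ℂ) - (0 : ℂ) * Complex.I - 1)) := by
        apply Tendsto.sub_const
        exact (tendsto_const_nhds.sub ((Complex.continuous_ofReal.tendsto 0).mul
          tendsto_const_nhds))
      simpa using this.mono_left nhdsWithin_le_nhds
    · filter_upwards [self_mem_nhdsWithin] with ε (hε : 0 < ε)
      simp [hε]
  have hre : ((x : ℂ) - 1).re < 0 := by simp; linarith
  have him : ((x : ℂ) - 1).im = 0 := by simp
  have habs : ‖(x : ℂ) - 1‖ = 1 - x := by
    rw [show (x : ℂ) - 1 = ((x - 1 : ℝ) : ℂ) by push_cast; ring, Complex.norm_real, Real.norm_eq_abs]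
    rw [abs_of_neg (by linarith)]; ring
  -- limits of log(z-1)
  have hlogp : Tendsto (fun ε : ℝ => Complex.log ((x : ℂ) + (ε : ℂ) * Complex.I - 1))
      (𝓝[>] 0) (𝓝 (Real.log (1 - x) + Real.pi * Complex.I)) := by
    have := (Complex.tendsto_log_nhdsWithin_im_nonneg_of_re_neg_of_im_zero hre him).comp hplus
    rwa [habs] at this
  have hlogm : Tendsto (fun ε : ℝ => Complex.log ((x : ℂ) - (ε : ℂ) * Complex.I - 1))
      (𝓝[>] 0) (𝓝 (Real.log (1 - x) - Real.pi * Complex.I)) := by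
    have := (Complex.tendsto_log_nhdsWithin_im_neg_of_re_neg_of_im_zero hre him).comp hminus
    rwa [habs] at this
  -- limits of log(z+1) : continuous at x+1
  have hx1pos : (0:ℝ) < 1 + x := by linarith
  have hcont1 : ContinuousAt Complex.log ((x : ℂ) + 1) := by
    apply continuousAt_clog
    rw [Complex.mem_slitPlane_iff]
    left; simp; linarith
  have hzp : Tendsto (fun ε : ℝ => (x : ℂ) + (ε : ℂ) * Complex.I) (𝓝[>] 0) (𝓝 (x : ℂ)) := by
    have : Tendsto (fun ε : ℝ => (x : ℂ) + (ε : ℂ) * Complex.I) (𝓝 0)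
        (𝓝 ((x : ℂ) + (0:ℂ) * Complex.I)) :=
      tendsto_const_nhds.add ((Complex.continuous_ofReal.tendsto 0).mul tendsto_const_nhds)
    simpa using this.mono_left nhdsWithin_le_nhds
  have hzm : Tendsto (fun ε : ℝ => (x : ℂ) - (ε : ℂ) * Complex.I) (𝓝[>] 0) (𝓝 (x : ℂ)) := by
    have : Tendsto (fun ε : ℝ => (x : ℂ) - (ε : ℂ) * Complex.I) (𝓝 0)
        (𝓝 ((x : ℂ) - (0:ℂ) * Complex.I)) :=
      tendsto_const_nhds.sub ((Complex.continuous_ofReal.tendsto 0).mul tendsto_const_nhds)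
    simpa using this.mono_left nhdsWithin_le_nhds
  have hlog1 : Complex.log ((x : ℂ) + 1) = ((Real.log (1 + x) : ℝ) : ℂ) := by
    rw [show (x : ℂ) + 1 = ((1 + x : ℝ) : ℂ) by push_cast; ring,
      Complex.ofReal_log (le_of_lt hx1pos)]
  have hlogp1 : Tendsto (fun ε : ℝ => Complex.log ((x : ℂ) + (ε : ℂ) * Complex.I + 1))
      (𝓝[>] 0) (𝓝 ((Real.log (1 + x) : ℂ))) := by
    rw [← hlog1]
    exact (hcont1.tendsto).comp (hzp.add_const 1)
  have hlogm1 : Tendsto (fun ε : ℝ => Complex.log ((x : ℂ) - (ε : ℂ) * Complex.I + 1))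
      (𝓝[>] 0) (𝓝 ((Real.log (1 + x) : ℂ))) := by
    rw [← hlog1]
    exact (hcont1.tendsto).comp (hzm.add_const 1)
  -- limits of rr
  have hIexp : Complex.exp ((Real.pi / 2 : ℝ) * Complex.I) = Complex.I := by
    rw [Complex.exp_mul_I, ← Complex.ofReal_cos, ← Complex.ofReal_sin]
    simp
  have hrrp : Tendsto (fun ε : ℝ => rr ((x : ℂ) + (ε : ℂ) * Complex.I))
      (𝓝[>] 0) (𝓝 (Complex.I * s)) := by
    have h := ((Complex.continuous_exp.tendsto _).comp (hlogp.const_mul (1/2 : ℂ))).mul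
      ((Complex.continuous_exp.tendsto _).comp (hlogp1.const_mul (1/2 : ℂ)))
    have heq : Complex.exp ((1/2 : ℂ) * ((Real.log (1 - x) : ℂ) + Real.pi * Complex.I)) *
        Complex.exp ((1/2 : ℂ) * (Real.log (1 + x) : ℂ)) = Complex.I * s := by
      rw [← Complex.exp_add, show (1/2 : ℂ) * ((Real.log (1 - x) : ℂ) + Real.pi * Complex.I) +
          (1/2 : ℂ) * (Real.log (1 + x) : ℂ) =
          ((Real.log (1 - x) / 2 + Real.log (1 + x) / 2 : ℝ) : ℂ) +
            ((Real.pi / 2 : ℝ) : ℂ) * Complex.I from by push_cast; ring,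
        Complex.exp_add, hIexp, hs_def, ← Complex.ofReal_exp, Real.exp_add]
      push_cast
      ring
    rw [← heq]
    exact h
  have hmIexp : Complex.exp (-((Real.pi / 2 : ℝ) * Complex.I)) = -Complex.I := by
    rw [show -((Real.pi / 2 : ℝ) * Complex.I) = ((-(Real.pi/2) : ℝ) : ℂ) * Complex.I by
      push_cast; ring, Complex.exp_mul_I, ← Complex.ofReal_cos, ← Complex.ofReal_sin]
    simp [Real.cos_pi_div_two, Real.sin_pi_div_two]
  have hrrm : Tendsto (fun ε : ℝ => rr ((x : ℂ) - (ε : ℂ) * Complex.I))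
      (𝓝[>] 0) (𝓝 (-(Complex.I * s))) := by
    have h := ((Complex.continuous_exp.tendsto _).comp (hlogm.const_mul (1/2 : ℂ))).mul
      ((Complex.continuous_exp.tendsto _).comp (hlogm1.const_mul (1/2 : ℂ)))
    have heq : Complex.exp ((1/2 : ℂ) * ((Real.log (1 - x) : ℂ) - Real.pi * Complex.I)) *
        Complex.exp ((1/2 : ℂ) * (Real.log (1 + x) : ℂ)) = -(Complex.I * s) := by
      rw [← Complex.exp_add, show (1/2 : ℂ) * ((Real.log (1 - x) : ℂ) - Real.pi * Complex.I) +
          (1/2 : ℂ) * (Real.log (1 + x) : ℂ) =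
          ((Real.log (1 - x) / 2 + Real.log (1 + x) / 2 : ℝ) : ℂ) +
            -(((Real.pi / 2 : ℝ) : ℂ) * Complex.I) from by push_cast; ring,
        Complex.exp_add, hmIexp, hs_def, ← Complex.ofReal_exp, Real.exp_add]
      push_cast
      ring
    rw [← heq]
    exact h
  -- limits of DD
  set dp : ℝ := x / (1 - s) with hdp_def
  set dm : ℝ := x / (1 + s) with hdm_def
  have hdp0 : 0 < dp := div_pos hx0 (by linarith)
  have hdm0 : 0 < dm := div_pos hx0 (by linarith)
  have hden_p : (1 : ℂ) + Complex.I * (Complex.I * s) = ((1 - s : ℝ) : ℂ) := by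
    rw [show Complex.I * (Complex.I * (s:ℂ)) = (Complex.I * Complex.I) * s by ring,
      Complex.I_mul_I]
    push_cast; ring
  have hden_m : (1 : ℂ) + Complex.I * (-(Complex.I * s)) = ((1 + s : ℝ) : ℂ) := by
    rw [show Complex.I * (-(Complex.I * (s:ℂ))) = -((Complex.I * Complex.I) * s) by ring,
      Complex.I_mul_I]
    push_cast; ring
  have hDDp : Tendsto (fun ε : ℝ => DD ((x : ℂ) + (ε : ℂ) * Complex.I))
      (𝓝[>] 0) (𝓝 ((dp : ℂ))) := by
    have hne : ((1 : ℂ) + Complex.I * (Complex.I * s)) ≠ 0 := by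
      rw [hden_p]
      exact_mod_cast (by linarith : (0:ℝ) < 1 - s).ne'
    have := hzp.div (tendsto_const_nhds.add (hrrp.const_mul Complex.I)) hne
    have heq : (x : ℂ) / (1 + Complex.I * (Complex.I * s)) = (dp : ℂ) := by
      rw [hden_p, hdp_def]; push_cast; ring
    rw [← heq]
    exact this
  have hDDm : Tendsto (fun ε : ℝ => DD ((x : ℂ) - (ε : ℂ) * Complex.I))
      (𝓝[>] 0) (𝓝 ((dm : ℂ))) := by
    have hne : ((1 : ℂ) + Complex.I * (-(Complex.I * s))) ≠ 0 := by
      rw [hden_m]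
      exact_mod_cast (by linarith : (0:ℝ) < 1 + s).ne'
    have := hzm.div (tendsto_const_nhds.add (hrrm.const_mul Complex.I)) hne
    have heq : (x : ℂ) / (1 + Complex.I * (-(Complex.I * s))) = (dm : ℂ) := by
      rw [hden_m, hdm_def]; push_cast; ring
    rw [← heq]
    exact this
  -- log continuous at dp, dm
  have hclogp : ContinuousAt Complex.log ((dp : ℂ)) := by
    apply continuousAt_clog; rw [Complex.mem_slitPlane_iff]; left; simpa using hdp0
  have hclogm : ContinuousAt Complex.log ((dm : ℂ)) := by
    apply continuousAt_clog; rw [Complex.mem_slitPlane_iff]; left; simpa using hdm0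
  have hlogDp := hclogp.tendsto.comp hDDp
  have hlogDm := hclogm.tendsto.comp hDDm
  set c : ℂ := Complex.I * (χ : ℂ) / (τ : ℂ) with hc_def
  have hgp : Tendsto (fun ε : ℝ => gg χ τ ((x : ℂ) + (ε : ℂ) * Complex.I)) (𝓝[>] 0)
      (𝓝 (Complex.I * s / 4 - c * Complex.log ((dp : ℂ)))) := by
    exact (hrrp.div_const 4).sub (hlogDp.const_mul c)
  have hgm : Tendsto (fun ε : ℝ => gg χ τ ((x : ℂ) - (ε : ℂ) * Complex.I)) (𝓝[>] 0)
      (𝓝 (-(Complex.I * s) / 4 - c * Complex.log ((dm : ℂ)))) := by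
    exact (hrrm.div_const 4).sub (hlogDm.const_mul c)
  have hsum := hgp.add hgm
  have hlogsum : Complex.log ((dp : ℂ)) + Complex.log ((dm : ℂ)) = 0 := by
    rw [← Complex.ofReal_log hdp0.le, ← Complex.ofReal_log hdm0.le, ← Complex.ofReal_add,
      ← Real.log_mul hdp0.ne' hdm0.ne']
    have : dp * dm = 1 := by
      have h1 : (1:ℝ) - s ≠ 0 := by linarith
      have h2 : (1:ℝ) + s ≠ 0 := by linarith
      rw [hdp_def, hdm_def]
      field_simp
      nlinarith [hs2]
    rw [this, Real.log_one, Complex.ofReal_zero]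
  have hval : Complex.I * s / 4 - c * Complex.log ((dp : ℂ)) +
      (-(Complex.I * s) / 4 - c * Complex.log ((dm : ℂ))) = 0 := by
    have : Complex.I * s / 4 - c * Complex.log ((dp : ℂ)) +
        (-(Complex.I * s) / 4 - c * Complex.log ((dm : ℂ))) =
        -(c * (Complex.log ((dp : ℂ)) + Complex.log ((dm : ℂ)))) := by ring
    rw [this, hlogsum, mul_zero, neg_zero]
  rwa [hval] at hsum
end
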